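/- arXiv:2003.01101 — 4 statements merged into one kernel-verified Lean document; each statement's English description precedes it below -/
import Mathlib

section
/- For all natural numbers n and l, f_n f_l + f_{n+3} f_{l+3} = 2 f_{n+l+3}, where f is the Fibonacci sequence. -/
theorem fib_mul_add_fib_add_three_mul (n l : ℕ) :
    Nat.fib n * Nat.fib l + Nat.fib (n + 3) * Nat.fib (l + 3) = 2 * Nat.fib (n + l + 3) := by
  have h : n + l + 3 = n + (l + 2) + 1 := by ring
  rw [h, Nat.fib_add n (l + 2), show n + 3 = n + 1 + 2 from rfl,
    show l + 3 = l + 1 + 2 from rfl, show l + 2 + 1 = l + 1 + 2 from rfl]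
  simp only [Nat.fib_add_two]
  ring
end

section
/- Every positive integer n can be written as n = x^2 + y^2 + 2z^2 + 2u^2 for some integers x, y, z, u. -/
lemma pair_parity (c d : ℤ) (h : c % 2 = d % 2) :
    ∃ z u : ℤ, c ^ 2 + d ^ 2 = 2 * z ^ 2 + 2 * u ^ 2 := by
  obtain ⟨k, hk⟩ : ∃ k, c = d + 2 * k := ⟨(c - d) / 2, by omega⟩
  exact ⟨k + d, k, by rw [hk]; ring⟩

theorem ramanujan_1_1_2_2 (n : ℕ) (hn : 0 < n) :
    ∃ x y z u : ℤ, (n : ℤ) = x ^ 2 + y ^ 2 + 2 * z ^ 2 + 2 * u ^ 2 := by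
  obtain ⟨a, b, c, d, h⟩ := Nat.sum_four_squares n
  have h' : (n : ℤ) = (a : ℤ) ^ 2 + (b : ℤ) ^ 2 + (c : ℤ) ^ 2 + (d : ℤ) ^ 2 := by
    exact_mod_cast (congrArg (Nat.cast (R := ℤ)) h).symm
  by_cases h1 : (a : ℤ) % 2 = (b : ℤ) % 2
  · obtain ⟨z, u, hz⟩ := pair_parity a b h1
    exact ⟨c, d, z, u, by linarith⟩
  · by_cases h2 : (a : ℤ) % 2 = (c : ℤ) % 2
    · obtain ⟨z, u, hz⟩ := pair_parity a c h2
      exact ⟨b, d, z, u, by linarith⟩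
    · have h3 : (b : ℤ) % 2 = (c : ℤ) % 2 := by omega
      obtain ⟨z, u, hz⟩ := pair_parity b c h3
      exact ⟨a, d, z, u, by linarith⟩
end

section
/- Every positive integer n can be written as n = x^2 + y^2 + 3z^2 + 3u^2 for some integers x, y, z, u. -/
/-! We prove Ramanujan's universality of `x² + y² + 3z² + 3u²` via the quadratic form
`qf a b c d = a² + ab + b² + c² + cd + d²` (the norm form of a maximal order in the
quaternion algebra `(-1,-3)`), which is multiplicative and supports Lagrange-style descent,
and a parity argument converting `a² + ab + b²` into `x² + 3z²`. -/

private def qf (a b c d : ℤ) : ℤ := a^2 + a*b + b^2 + c^2 + c*d + d^2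

private lemma qf_nonneg (a b c d : ℤ) : 0 ≤ qf a b c d := by
  unfold qf
  nlinarith [sq_nonneg (2*a+b), sq_nonneg b, sq_nonneg (2*c+d), sq_nonneg d]

private lemma qf_mul (a1 b1 c1 d1 a2 b2 c2 d2 : ℤ) :
    qf a1 b1 c1 d1 * qf a2 b2 c2 d2 =
    qf (a1*a2 + a1*b2 + b1*b2 + c1*c2 + c2*d1 + d1*d2)
       (-a1*b2 + a2*b1 + c1*d2 - c2*d1)
       (-a1*c2 + a2*c1 - b1*c2 - b1*d2 + b2*c1 + b2*d1)
       (-a1*d2 + a2*d1 + b1*c2 - b2*c1) := by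
  unfold qf; ring

private lemma sq_le_sq_of_abs_le {x M : ℤ} (h1 : -M ≤ x) (h2 : x ≤ M) : x^2 ≤ M^2 := by
  nlinarith

/-- rounding: find `q` with `|t - 2qm| ≤ m`. -/
private lemma exists_round (t m : ℤ) (hm : 0 < m) :
    ∃ q : ℤ, -m ≤ t - 2*q*m ∧ t - 2*q*m ≤ m := by
  refine ⟨(t + m) / (2*m), ?_, ?_⟩ <;>
  · have h := Int.mul_ediv_add_emod (t + m) (2*m)
    have h1 := Int.emod_nonneg (t + m) (by omega : (2*m) ≠ 0)
    have h2 := Int.emod_lt_of_pos (t + m) (by omega : 0 < 2*m)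
    nlinarith [h, h1, h2]

/-- The algebraic heart of the descent step. -/
private lemma step (M p S a b c d q1 q2 q3 q4 : ℤ) (hM : M ≠ 0)
    (hE : M * p = qf a b c d)
    (hS : qf (a - q1*M) (b - q2*M) (c - q3*M) (d - q4*M) = M * S) :
    S * p = qf (p - (a*q1 + a*q2 + b*q2 + c*q3 + d*q3 + d*q4))
               (a*q2 - b*q1 - c*q4 + d*q3)
               (a*q3 + b*q3 + b*q4 - c*q1 - c*q2 - d*q2)
               (a*q4 - b*q3 + c*q2 - d*q1) := by
  refine mul_left_cancel₀ (pow_ne_zero 2 hM) ?_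
  have hE' := hE; unfold qf at hE'
  have hW1 : a*(a - q1*M) + a*(b - q2*M) + b*(b - q2*M) + c*(c - q3*M) + (c - q3*M)*d + d*(d - q4*M)
      = M * (p - (a*q1 + a*q2 + b*q2 + c*q3 + d*q3 + d*q4)) := by
    linear_combination -hE'
  have hW2 : -a*(b - q2*M) + (a - q1*M)*b + c*(d - q4*M) - (c - q3*M)*d
      = M * (a*q2 - b*q1 - c*q4 + d*q3) := by ring
  have hW3 : -a*(c - q3*M) + (a - q1*M)*c - b*(c - q3*M) - b*(d - q4*M) + (b - q2*M)*c + (b - q2*M)*d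
      = M * (a*q3 + b*q3 + b*q4 - c*q1 - c*q2 - d*q2) := by ring
  have hW4 : -a*(d - q4*M) + (a - q1*M)*d + b*(c - q3*M) - (b - q2*M)*c
      = M * (a*q4 - b*q3 + c*q2 - d*q1) := by ring
  calc M^2 * (S * p) = (M*p) * (M*S) := by ring
    _ = qf a b c d * qf (a - q1*M) (b - q2*M) (c - q3*M) (d - q4*M) := by rw [hE, hS]
    _ = qf (a*(a - q1*M) + a*(b - q2*M) + b*(b - q2*M) + c*(c - q3*M) + (c - q3*M)*d + d*(d - q4*M))
          (-a*(b - q2*M) + (a - q1*M)*b + c*(d - q4*M) - (c - q3*M)*d)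
          (-a*(c - q3*M) + (a - q1*M)*c - b*(c - q3*M) - b*(d - q4*M) + (b - q2*M)*c + (b - q2*M)*d)
          (-a*(d - q4*M) + (a - q1*M)*d + b*(c - q3*M) - (b - q2*M)*c) :=
        qf_mul a b c d (a - q1*M) (b - q2*M) (c - q3*M) (d - q4*M)
    _ = qf (M * (p - (a*q1 + a*q2 + b*q2 + c*q3 + d*q3 + d*q4)))
          (M * (a*q2 - b*q1 - c*q4 + d*q3))
          (M * (a*q3 + b*q3 + b*q4 - c*q1 - c*q2 - d*q2))
          (M * (a*q4 - b*q3 + c*q2 - d*q1)) := by rw [hW1, hW2, hW3, hW4]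
    _ = M^2 * qf (p - (a*q1 + a*q2 + b*q2 + c*q3 + d*q3 + d*q4))
          (a*q2 - b*q1 - c*q4 + d*q3)
          (a*q3 + b*q3 + b*q4 - c*q1 - c*q2 - d*q2)
          (a*q4 - b*q3 + c*q2 - d*q1) := by unfold qf; ring

/-- Descent: if some positive multiple `m·p` with `m < p` is represented, then `p` is. -/
private lemma descent (p : ℕ) (pp : p.Prime) :
    ∀ m : ℕ, 0 < m → (m : ℤ) < (p : ℤ) →
    (∃ a b c d : ℤ, (m : ℤ) * (p : ℤ) = qf a b c d) →
    ∃ a b c d : ℤ, (p : ℤ) = qf a b c d := by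
  intro m
  induction m using Nat.strong_induction_on with
  | _ m ih =>
    intro hm0 hmp hrep
    obtain ⟨a, b, c, d, hE⟩ := hrep
    rcases eq_or_lt_of_le (Nat.one_le_iff_ne_zero.mpr (Nat.pos_iff_ne_zero.mp hm0)) with h1 | h2
    · refine ⟨a, b, c, d, ?_⟩
      rw [← hE, ← h1]; push_cast; ring
    · obtain ⟨M, hMdef⟩ : ∃ M : ℤ, M = (m : ℤ) := ⟨_, rfl⟩
      have hM0 : 0 < M := by rw [hMdef]; exact_mod_cast hm0
      rw [← hMdef] at hE
      obtain ⟨q2, hq2a, hq2b⟩ := exists_round (2*b) M hM0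
      obtain ⟨q1, hq1a, hq1b⟩ := exists_round (2*a + (b - q2*M)) M hM0
      obtain ⟨q4, hq4a, hq4b⟩ := exists_round (2*d) M hM0
      obtain ⟨q3, hq3a, hq3b⟩ := exists_round (2*c + (d - q4*M)) M hM0
      obtain ⟨S, hSdef⟩ : ∃ S : ℤ, S = (p : ℤ) + (- (2*a*q1) - a*q2 - b*q1 - 2*b*q2 - 2*c*q3
          - c*q4 - d*q3 - 2*d*q4
          + M*q1*q1 + M*q1*q2 + M*q2*q2 + M*q3*q3 + M*q3*q4 + M*q4*q4) := ⟨_, rfl⟩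
      have hS : qf (a - q1*M) (b - q2*M) (c - q3*M) (d - q4*M) = M * S := by
        have hE' := hE; unfold qf at hE'
        rw [hSdef]; unfold qf; linear_combination -hE'
      -- bounds
      have hu1 := sq_le_sq_of_abs_le hq1a hq1b
      have hv1 := sq_le_sq_of_abs_le hq2a hq2b
      have hu2 := sq_le_sq_of_abs_le hq3a hq3b
      have hv2 := sq_le_sq_of_abs_le hq4a hq4b
      have hid : 16 * (M * S) = 4*(2*a + (b - q2*M) - 2*q1*M)^2 + 3*(2*b - 2*q2*M)^2
          + 4*(2*c + (d - q4*M) - 2*q3*M)^2 + 3*(2*d - 2*q4*M)^2 := by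
        rw [← hS]; unfold qf; ring
      have hqfS : 16 * (M * S) ≤ 14 * M^2 := by
        rw [hid]; linarith [hu1, hv1, hu2, hv2]
      have hS0 : 0 ≤ S := by
        have h := qf_nonneg (a - q1*M) (b - q2*M) (c - q3*M) (d - q4*M)
        rw [hS] at h
        exact nonneg_of_mul_nonneg_right h hM0
      have hSM : S < M := by
        have hMM : (0:ℤ) < M * M := mul_pos hM0 hM0
        have h16 : 16 * (M * S) < 16 * (M * M) := by nlinarith [hqfS, hMM]
        have := lt_of_mul_lt_mul_left (show M * S < M * M by linarith) hM0.le
        exact this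
      rcases hS0.lt_or_eq with hSpos | hSzero
      · -- S > 0 : descend to S
        have hstep := step M (p : ℤ) S a b c d q1 q2 q3 q4 (ne_of_gt hM0) hE hS
        have hcast : ((S.toNat : ℤ)) = S := Int.toNat_of_nonneg hS0
        refine ih S.toNat ?_ ?_ ?_ ?_
        · have hSm' : S < (m : ℤ) := hMdef ▸ hSM
          omega
        · omega
        · have hSm' : S < (m : ℤ) := hMdef ▸ hSM
          rw [hcast]; omega
        · exact ⟨_, _, _, _, by rw [hcast]; exact hstep⟩
      · -- S = 0 : then m ∣ p, contradiction
        exfalso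
        have h0 : qf (a - q1*M) (b - q2*M) (c - q3*M) (d - q4*M) = 0 := by
          rw [hS, ← hSzero, mul_zero]
        have hsum : (2*(a - q1*M) + (b - q2*M))^2 + 3*(b - q2*M)^2
            + (2*(c - q3*M) + (d - q4*M))^2 + 3*(d - q4*M)^2 = 0 := by
          unfold qf at h0; linear_combination 4*h0
        have hb0 : b - q2*M = 0 := by
          have h' : (b - q2*M)^2 ≤ 0 := by
            linarith [hsum, sq_nonneg (2*(a - q1*M) + (b - q2*M)),
              sq_nonneg (2*(c - q3*M) + (d - q4*M)), sq_nonneg (d - q4*M)]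
          exact sq_eq_zero_iff.mp (le_antisymm h' (sq_nonneg _))
        have hd0 : d - q4*M = 0 := by
          have h' : (d - q4*M)^2 ≤ 0 := by
            linarith [hsum, sq_nonneg (2*(a - q1*M) + (b - q2*M)),
              sq_nonneg (2*(c - q3*M) + (d - q4*M)), sq_nonneg (b - q2*M)]
          exact sq_eq_zero_iff.mp (le_antisymm h' (sq_nonneg _))
        have ha0 : a - q1*M = 0 := by
          have h' : (2*(a - q1*M) + (b - q2*M))^2 ≤ 0 := by
            linarith [hsum, sq_nonneg (b - q2*M),
              sq_nonneg (2*(c - q3*M) + (d - q4*M)), sq_nonneg (d - q4*M)]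
          have h'' := sq_eq_zero_iff.mp (le_antisymm h' (sq_nonneg _))
          linarith [hb0]
        have hc0 : c - q3*M = 0 := by
          have h' : (2*(c - q3*M) + (d - q4*M))^2 ≤ 0 := by
            linarith [hsum, sq_nonneg (b - q2*M),
              sq_nonneg (2*(a - q1*M) + (b - q2*M)), sq_nonneg (d - q4*M)]
          have h'' := sq_eq_zero_iff.mp (le_antisymm h' (sq_nonneg _))
          linarith [hd0]
        have ha : a = q1*M := by linarith
        have hb : b = q2*M := by linarith
        have hc : c = q3*M := by linarith
        have hd : d = q4*M := by linarith
        subst ha hb hc hd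
        have hp2 : (p : ℤ) = M * qf q1 q2 q3 q4 := by
          apply mul_left_cancel₀ (ne_of_gt hM0)
          rw [hE]; unfold qf; ring
        have hdvd : M ∣ (p : ℤ) := ⟨qf q1 q2 q3 q4, hp2⟩
        rw [hMdef] at hdvd
        have hdvd' : m ∣ p := Int.natCast_dvd_natCast.mp hdvd
        have hmp' : m < p := by exact_mod_cast hmp
        rcases pp.eq_one_or_self_of_dvd m hdvd' with h | h <;> omega

/-- Base case: for a prime `p ≥ 5`, some `m·p` with `0 < m < p` is represented. -/
private lemma base (p : ℕ) (pp : p.Prime) (hp5 : 5 ≤ p) :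
    ∃ m : ℕ, 0 < m ∧ m < p ∧ ∃ a b c d : ℤ, (m : ℤ) * (p : ℤ) = qf a b c d := by
  haveI : Fact p.Prime := ⟨pp⟩
  have hodd : p % 2 = 1 := pp.eq_two_or_odd.resolve_left (by omega)
  have h2 : (2 : ZMod p) ≠ 0 := by
    intro h
    have h' : ((2 : ℕ) : ZMod p) = 0 := by exact_mod_cast h
    have := (ZMod.natCast_eq_zero_iff 2 p).mp h'
    have := Nat.le_of_dvd (by norm_num) this
    omega
  have h3 : (3 : ZMod p) ≠ 0 := by
    intro h
    have h' : ((3 : ℕ) : ZMod p) = 0 := by exact_mod_cast h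
    have := (ZMod.natCast_eq_zero_iff 3 p).mp h'
    have := Nat.le_of_dvd (by norm_num) this
    omega
  obtain ⟨x, z, hxz⟩ := FiniteField.exists_root_sum_quadratic
    (f := Polynomial.X^2 + Polynomial.C 4) (g := Polynomial.C 3 * Polynomial.X^2)
    (Polynomial.degree_X_pow_add_C (by norm_num) 4)
    (Polynomial.degree_C_mul_X_pow 2 h3)
    (by rw [ZMod.card]; exact hodd)
  simp only [Polynomial.eval_add, Polynomial.eval_mul, Polynomial.eval_pow,
    Polynomial.eval_X, Polynomial.eval_C] at hxz
  -- hxz : x^2 + 4 + 3*z^2 = 0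
  have h4 : (4 : ZMod p) ≠ 0 := by
    have h22 : (4 : ZMod p) = 2*2 := by norm_num
    rw [h22]; exact mul_ne_zero h2 h2
  obtain ⟨A, hA⟩ : ∃ A : ZMod p, A = (x - z) * (2 : ZMod p)⁻¹ := ⟨_, rfl⟩
  have hAB : A^2 + A*z + z^2 = -1 := by
    apply mul_left_cancel₀ h4
    have h2A : A * 2 = x - z := by
      rw [hA, mul_assoc, inv_mul_cancel₀ h2, mul_one]
    calc (4 : ZMod p) * (A^2 + A*z + z^2) = (A*2 + z)^2 + 3*z^2 := by ring
      _ = (x - z + z)^2 + 3*z^2 := by rw [h2A]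
      _ = x^2 + 3*z^2 := by ring
      _ = 4 * (-1) := by linear_combination hxz
  have hcast : ((A.valMinAbs^2 + A.valMinAbs*z.valMinAbs + z.valMinAbs^2 + 1 : ℤ) : ZMod p) = 0 := by
    push_cast [ZMod.coe_valMinAbs]
    linear_combination hAB
  obtain ⟨k, hk⟩ := (ZMod.intCast_zmod_eq_zero_iff_dvd _ p).mp hcast
  have ha1 := A.valMinAbs_mem_Ioc.1
  have ha2 := A.valMinAbs_mem_Ioc.2
  have hb1 := z.valMinAbs_mem_Ioc.1
  have hb2 := z.valMinAbs_mem_Ioc.2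
  have hp5' : (5 : ℤ) ≤ (p : ℤ) := by exact_mod_cast hp5
  have h4a : (A.valMinAbs*2)^2 ≤ (p:ℤ)^2 := by nlinarith [ha1, ha2]
  have h4b : (z.valMinAbs*2)^2 ≤ (p:ℤ)^2 := by nlinarith [hb1, hb2]
  have hpos : 0 < A.valMinAbs^2 + A.valMinAbs*z.valMinAbs + z.valMinAbs^2 + 1 := by
    nlinarith [sq_nonneg (2*A.valMinAbs + z.valMinAbs), sq_nonneg z.valMinAbs]
  have hlt : A.valMinAbs^2 + A.valMinAbs*z.valMinAbs + z.valMinAbs^2 + 1 < (p:ℤ)^2 := by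
    nlinarith [h4a, h4b, sq_nonneg (A.valMinAbs - z.valMinAbs), hp5']
  have hk0 : 0 < k := by nlinarith [hk, hpos, hp5']
  have hkp : k < (p : ℤ) := by nlinarith [hk, hlt, hp5']
  refine ⟨k.toNat, by omega, by omega, A.valMinAbs, z.valMinAbs, 1, 0, ?_⟩
  rw [Int.toNat_of_nonneg hk0.le]
  unfold qf
  linear_combination -hk

private lemma repqf_prime (p : ℕ) (pp : p.Prime) : ∃ a b c d : ℤ, (p : ℤ) = qf a b c d := by
  rcases eq_or_ne p 2 with rfl | hne2
  · exact ⟨1, 0, 1, 0, by norm_num [qf]⟩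
  rcases eq_or_ne p 3 with rfl | hne3
  · exact ⟨1, 1, 0, 0, by norm_num [qf]⟩
  have h4 : p ≠ 4 := by rintro rfl; norm_num at pp
  have hp5 : 5 ≤ p := by have := pp.two_le; omega
  obtain ⟨m, hm0, hmp, hrep⟩ := base p pp hp5
  exact descent p pp m hm0 (by exact_mod_cast hmp) hrep

private lemma repqf_all (n : ℕ) : ∃ a b c d : ℤ, (n : ℤ) = qf a b c d := by
  induction n using Nat.recOnMul with
  | zero => exact ⟨0, 0, 0, 0, by norm_num [qf]⟩
  | one => exact ⟨1, 0, 0, 0, by norm_num [qf]⟩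
  | prime p hp => exact repqf_prime p hp
  | mul a b ha hb =>
    obtain ⟨a1, b1, c1, d1, h₁⟩ := ha
    obtain ⟨a2, b2, c2, d2, h₂⟩ := hb
    refine ⟨a1*a2 + a1*b2 + b1*b2 + c1*c2 + c2*d1 + d1*d2,
      -a1*b2 + a2*b1 + c1*d2 - c2*d1,
      -a1*c2 + a2*c1 - b1*c2 - b1*d2 + b2*c1 + b2*d1,
      -a1*d2 + a2*d1 + b1*c2 - b2*c1, ?_⟩
    push_cast
    rw [h₁, h₂]
    exact qf_mul a1 b1 c1 d1 a2 b2 c2 d2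

private lemma bin_rep (a b : ℤ) : ∃ x z : ℤ, a^2 + a*b + b^2 = x^2 + 3*z^2 := by
  rcases Int.even_or_odd b with ⟨t, ht⟩ | hb
  · exact ⟨a + t, t, by rw [ht]; ring⟩
  · rcases Int.even_or_odd a with ⟨t, ht⟩ | ha
    · exact ⟨b + t, t, by rw [ht]; ring⟩
    · obtain ⟨t, ht⟩ := Odd.add_odd ha hb
      exact ⟨a - t, t, by linear_combination (b + 2*t) * ht⟩

theorem ramanujan_1_1_3_3 (n : ℕ) (hn : 0 < n) :
    ∃ x y z u : ℤ, (n : ℤ) = x ^ 2 + y ^ 2 + 3 * z ^ 2 + 3 * u ^ 2 := by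
  obtain ⟨a, b, c, d, h⟩ := repqf_all n
  obtain ⟨x1, z1, h1⟩ := bin_rep a b
  obtain ⟨x2, z2, h2⟩ := bin_rep c d
  refine ⟨x1, x2, z1, z2, ?_⟩
  unfold qf at h
  linear_combination h + h1 + h2
end

section
/- Every positive integer n can be written as n = x^2 + 2y^2 + 2z^2 + 4u^2 for some integers x, y, z, u. -/
lemma sq_mod_two (x : ℤ) : x ^ 2 % 2 = x % 2 := by
  rcases Int.even_or_odd x with ⟨k, hk⟩ | ⟨k, hk⟩ <;> rw [hk] <;> ring_nf <;> omega

lemma pair_sq (a b : ℤ) (h : (a + b) % 2 = 0) :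
    ∃ p q : ℤ, a ^ 2 + b ^ 2 = 2 * p ^ 2 + 2 * q ^ 2 := by
  obtain ⟨p, hp⟩ : ∃ p : ℤ, a + b = 2 * p := ⟨(a + b) / 2, by omega⟩
  refine ⟨p, a - p, ?_⟩
  have hb : b = 2 * p - a := by omega
  subst hb; ring

lemma rep_aux (a b c d : ℤ) (he : a % 2 = 0) :
    ∃ x y z u : ℤ, a ^ 2 + b ^ 2 + c ^ 2 + d ^ 2
      = x ^ 2 + 2 * y ^ 2 + 2 * z ^ 2 + 4 * u ^ 2 := by
  obtain ⟨u, hu⟩ : ∃ u : ℤ, a = 2 * u := ⟨a / 2, by omega⟩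
  have hb := Int.emod_two_eq b
  have hc := Int.emod_two_eq c
  have hd := Int.emod_two_eq d
  have : (b + c) % 2 = 0 ∨ (b + d) % 2 = 0 ∨ (c + d) % 2 = 0 := by omega
  rcases this with h | h | h
  · obtain ⟨p, q, hpq⟩ := pair_sq b c h
    exact ⟨d, p, q, u, by rw [hu]; linarith [hpq]⟩
  · obtain ⟨p, q, hpq⟩ := pair_sq b d h
    exact ⟨c, p, q, u, by rw [hu]; linarith [hpq]⟩
  · obtain ⟨p, q, hpq⟩ := pair_sq c d h
    exact ⟨b, p, q, u, by rw [hu]; linarith [hpq]⟩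

lemma form1122 (m : ℕ) :
    ∃ a b c d : ℤ, (m : ℤ) = a ^ 2 + b ^ 2 + 2 * c ^ 2 + 2 * d ^ 2 := by
  obtain ⟨a, b, c, d, h⟩ := Nat.sum_four_squares m
  have h' : (a : ℤ) ^ 2 + (b : ℤ) ^ 2 + (c : ℤ) ^ 2 + (d : ℤ) ^ 2 = (m : ℤ) := by
    exact_mod_cast h
  have ha := Int.emod_two_eq (a : ℤ)
  have hb := Int.emod_two_eq (b : ℤ)
  have hc := Int.emod_two_eq (c : ℤ)
  have hh : ((a : ℤ) + b) % 2 = 0 ∨ ((a : ℤ) + c) % 2 = 0 ∨ ((b : ℤ) + c) % 2 = 0 := by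
    omega
  rcases hh with h2 | h2 | h2
  · obtain ⟨p, q, hpq⟩ := pair_sq _ _ h2
    exact ⟨c, d, p, q, by linarith [hpq]⟩
  · obtain ⟨p, q, hpq⟩ := pair_sq _ _ h2
    exact ⟨b, d, p, q, by linarith [hpq]⟩
  · obtain ⟨p, q, hpq⟩ := pair_sq _ _ h2
    exact ⟨a, d, p, q, by linarith [hpq]⟩

theorem ramanujan_1_2_2_4 (n : ℕ) (hn : 0 < n) :
    ∃ x y z u : ℤ, (n : ℤ) = x ^ 2 + 2 * y ^ 2 + 2 * z ^ 2 + 4 * u ^ 2 := by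
  rcases Nat.even_or_odd n with he | ho
  · obtain ⟨m, hm⟩ := he
    obtain ⟨a, b, c, d, h⟩ := form1122 m
    refine ⟨2 * c, a, b, d, ?_⟩
    have : (n : ℤ) = 2 * m := by rw [hm]; push_cast; ring
    rw [this, h]; ring
  · obtain ⟨a, b, c, d, h⟩ := Nat.sum_four_squares n
    have h' : (a : ℤ) ^ 2 + (b : ℤ) ^ 2 + (c : ℤ) ^ 2 + (d : ℤ) ^ 2 = (n : ℤ) := by
      exact_mod_cast h
    have hA : (a : ℤ) ^ 2 % 2 = (a : ℤ) % 2 := by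
      exact sq_mod_two _
    have hB : (b : ℤ) ^ 2 % 2 = (b : ℤ) % 2 := by
      exact sq_mod_two _
    have hC : (c : ℤ) ^ 2 % 2 = (c : ℤ) % 2 := by
      exact sq_mod_two _
    have hD : (d : ℤ) ^ 2 % 2 = (d : ℤ) % 2 := by
      exact sq_mod_two _
    have hno : (n : ℤ) % 2 = 1 := by
      obtain ⟨m, hm⟩ := ho; omega
    have ha2 := Int.emod_two_eq (a : ℤ)
    have hb2 := Int.emod_two_eq (b : ℤ)
    have hc2 := Int.emod_two_eq (c : ℤ)
    have hd2 := Int.emod_two_eq (d : ℤ)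
    have hev : (a : ℤ) % 2 = 0 ∨ (b : ℤ) % 2 = 0 ∨ (c : ℤ) % 2 = 0 ∨ (d : ℤ) % 2 = 0 := by
      omega
    rcases hev with h0 | h0 | h0 | h0
    · obtain ⟨x, y, z, u, hx⟩ := rep_aux _ (b : ℤ) c d h0
      exact ⟨x, y, z, u, by linarith⟩
    · obtain ⟨x, y, z, u, hx⟩ := rep_aux _ (a : ℤ) c d h0
      exact ⟨x, y, z, u, by linarith⟩
    · obtain ⟨x, y, z, u, hx⟩ := rep_aux _ (a : ℤ) b d h0
      exact ⟨x, y, z, u, by linarith⟩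
    · obtain ⟨x, y, z, u, hx⟩ := rep_aux _ (a : ℤ) b c h0
      exact ⟨x, y, z, u, by linarith⟩
end
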